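/- Let S ⊆ V(G) be a separator of G such that for every component C associated with S there exist pairwise disjoint sets {B_u}_{u ∈ S} of vertices of V(G) \ C with each B_u connected in G, u ∈ B_u for each u ∈ S, and for every pair of distinct u, v ∈ S some edge of G joins a vertex of B_u to a vertex of B_v (i.e., the subgraph of G induced by V(G) \ C contains a clique on S as a labelled minor). Let G' be the graph obtained from G by adding all edges between pairs of distinct non-adjacent vertices of S. Then tw(G') = tw(G), i.e., S is a safe separator of G. -/

import Mathlib

namespace TW

variable {V : Type} [Finite V]

/-- The open neighborhood of a vertex set `U`: vertices outside `U`
adjacent to some vertex of `U`. -/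
def nbhd (G : SimpleGraph V) (U : Set V) : Set V :=
  {v | v ∉ U ∧ ∃ u ∈ U, G.Adj u v}

/-- The closed neighborhood `N[U] = U ∪ N(U)`. -/
def nbhdClosed (G : SimpleGraph V) (U : Set V) : Set V :=
  U ∪ nbhd G U

/-- A set `C` is connected in `G` if the induced subgraph `G[C]` is connected. -/
def SetConnected (G : SimpleGraph V) (C : Set V) : Prop :=
  (G.induce C).Connected

/-- `C` is a component associated with `S`: a connected component of the
subgraph of `G` induced by the complement of `S`. -/
def IsCompAssoc (G : SimpleGraph V) (S C : Set V) : Prop :=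
  SetConnected G C ∧ Disjoint C S ∧ nbhd G C ⊆ S

/-- `C` is a full component associated with `S`. -/
def IsFullComp (G : SimpleGraph V) (S C : Set V) : Prop :=
  IsCompAssoc G S C ∧ nbhd G C = S

/-- `S` is a minimal separator: at least two full components are associated with `S`. -/
def MinimalSeparator (G : SimpleGraph V) (S : Set V) : Prop :=
  ∃ C D : Set V, IsFullComp G S C ∧ IsFullComp G S D ∧ C ≠ D

/-- The number of connected components of the subgraph induced by the complement of `S`. -/
noncomputable def numComponents (G : SimpleGraph V) (S : Set V) : ℕ :=
  Nat.card (G.induce (Sᶜ : Set V)).ConnectedComponent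

/-- `S` is a separator of `G`: removing `S` increases the number of connected
components of `G`. -/
def Separator (G : SimpleGraph V) (S : Set V) : Prop :=
  numComponents G (∅ : Set V) < numComponents G S

/-- `S` is cliquish: every two distinct vertices of `S` are adjacent or lie in
the neighborhood of a common component associated with `S`. -/
def Cliquish (G : SimpleGraph V) (S : Set V) : Prop :=
  ∀ u ∈ S, ∀ v ∈ S, u ≠ v →
    G.Adj u v ∨ ∃ C, IsCompAssoc G S C ∧ u ∈ nbhd G C ∧ v ∈ nbhd G C

/-- A graph is chordal if every induced cycle has length exactly three. -/
def IsChordal {W : Type} (H : SimpleGraph W) : Prop :=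
  ∀ ⦃v : W⦄ (w : H.Walk v v), w.IsCycle →
    (∀ x ∈ w.support, ∀ y ∈ w.support, H.Adj x y → s(x, y) ∈ w.edges) →
    w.length = 3

/-- `H` is a minimal chordal completion of `G`. -/
def MinChordalCompletion {W : Type} (G H : SimpleGraph W) : Prop :=
  G ≤ H ∧ IsChordal H ∧ ∀ H' : SimpleGraph W, G ≤ H' → H' ≤ H → IsChordal H' → H' = H

/-- `Ω` is a potential maximal clique of `G`: a clique in some minimal chordal
completion of `G`. -/
def PMC {W : Type} (G : SimpleGraph W) (Ω : Set W) : Prop :=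
  ∃ H : SimpleGraph W, MinChordalCompletion G H ∧ H.IsClique Ω

/-- A tree-decomposition of `G`. -/
structure TreeDecomp {W : Type} (G : SimpleGraph W) where
  ι : Type
  tree : SimpleGraph ι
  isTree : tree.IsTree
  bag : ι → Set W
  bag_cover : ∀ v : W, ∃ i, v ∈ bag i
  bag_edge : ∀ ⦃u v : W⦄, G.Adj u v → ∃ i, u ∈ bag i ∧ v ∈ bag i
  bag_conn : ∀ v : W, (tree.induce {i | v ∈ bag i}).Connected

/-- The width of a tree-decomposition: maximum bag size minus one. -/
noncomputable def TreeDecomp.width {W : Type} {G : SimpleGraph W} (td : TreeDecomp G) : ℕ :=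
  (⨆ i, (td.bag i).ncard) - 1

/-- The treewidth of `G`: the minimum width over all tree-decompositions. -/
noncomputable def treewidth {W : Type} (G : SimpleGraph W) : ℕ :=
  ⨅ td : TreeDecomp G, td.width

/-- The graph on `V` whose edges are all pairs of distinct vertices of `S`. -/
def cliqueOn {W : Type} (S : Set W) : SimpleGraph W where
  Adj u v := u ≠ v ∧ u ∈ S ∧ v ∈ S
  symm := ⟨by rintro u v ⟨h, hu, hv⟩; exact ⟨h.symm, hv, hu⟩⟩
  loopless := ⟨by rintro u ⟨h, _, _⟩; exact h rfl⟩

/-- `G⟨C⟩`: the graph on `N[C]` obtained from `G[N[C]]` by completing `N(C)` into a clique. -/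
def gAngle (G : SimpleGraph V) (C : Set V) : SimpleGraph ↥(nbhdClosed G C) :=
  (G ⊔ cliqueOn (nbhd G C)).induce (nbhdClosed G C)

/-- A connected set `C` is feasible if `tw(G⟨C⟩) ≤ k`. -/
def Feasible (G : SimpleGraph V) (k : ℕ) (C : Set V) : Prop :=
  treewidth (gAngle G C) ≤ k

/-- `crib S K`: the union of `K \ S` and all components associated with `K`
that are unconfined to `S` (i.e. whose neighborhood is not contained in `S`). -/
def crib (G : SimpleGraph V) (S K : Set V) : Set V :=
  (K \ S) ∪ ⋃ C ∈ {C : Set V | IsCompAssoc G K C ∧ ¬ nbhd G C ⊆ S}, C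

section Order

variable [LinearOrder V]

/-- The minimum element of a nonempty subset of a finite linear order. -/
noncomputable def setMin (U : Set V) (hU : U.Nonempty) : V :=
  wellFounded_lt.min U hU

/-- `U ≺ W`: `min U < min W` (for nonempty sets `U`, `W`). -/
def SetPrec (U W : Set V) : Prop :=
  ∃ (hU : U.Nonempty) (hW : W.Nonempty), setMin U hU < setMin W hW

/-- A connected set `C` is inbound if some full component `A` associated with
`N(C)` satisfies `A ≺ C`. -/
def Inbound (G : SimpleGraph V) (C : Set V) : Prop :=
  SetConnected G C ∧ ∃ A, IsFullComp G (nbhd G C) A ∧ SetPrec A C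

/-- A connected set is outbound if it is not inbound. -/
def Outbound (G : SimpleGraph V) (C : Set V) : Prop :=
  SetConnected G C ∧ ¬ ∃ A, IsFullComp G (nbhd G C) A ∧ SetPrec A C

open Classical in
/-- The outlet of `K`: `∅` if no non-full outbound component is associated with `K`;
otherwise `N(A)` for a non-full outbound component `A` associated with `K`
with `N(A)` maximal. -/
noncomputable def outlet (G : SimpleGraph V) (K : Set V) : Set V :=
  if h : ∃ A, IsCompAssoc G K A ∧ nbhd G A ≠ K ∧ Outbound G A ∧
      ∀ A', IsCompAssoc G K A' → nbhd G A' ≠ K → Outbound G A' →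
        ¬ nbhd G A ⊂ nbhd G A'
  then nbhd G h.choose
  else ∅

/-- `support K`: the components associated with `K` that are unconfined to `outlet K`. -/
def support (G : SimpleGraph V) (K : Set V) : Set (Set V) :=
  {C | IsCompAssoc G K C ∧ ¬ nbhd G C ⊆ outlet G K}

/-- An O-block `(N(A), A)` (with `A` outbound and `|N(A)| ≤ k`) is feasible if
`N(A) = ⋃_{C ∈ 𝒞} N(C)` for some set `𝒞` of feasible inbound connected sets. -/
def FeasibleOBlock (G : SimpleGraph V) (k : ℕ) (A : Set V) : Prop :=
  Outbound G A ∧ (nbhd G A).ncard ≤ k ∧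
    ∃ 𝒞 : Set (Set V), (∀ C ∈ 𝒞, Inbound G C ∧ Feasible G k C) ∧
      nbhd G A = ⋃ C ∈ 𝒞, nbhd G C

/-- A potential maximal clique `Ω` is buildable. -/
def Buildable (G : SimpleGraph V) (k : ℕ) (Ω : Set V) : Prop :=
  Ω.ncard ≤ k + 1 ∧
    ((∃ v : V, Ω = nbhdClosed G {v}) ∨
     (∃ 𝒞 ⊆ support G Ω, (∀ C ∈ 𝒞, Feasible G k C) ∧ Ω = ⋃ C ∈ 𝒞, nbhd G C) ∨
     (∃ A, FeasibleOBlock G k A ∧ ∃ v ∈ nbhd G A, Ω = nbhd G A ∪ (G.neighborSet v ∩ A)))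

end Order

end TW

/-!
Completing `S` can only increase the treewidth; for the converse fix a tree-decomposition of `G`.
For a component `C` of `G - S`, contracting each branch set `B u` (disjoint from `C`) onto `u`
turns the bags `X` into `(X ∩ C) ∪ {u ∈ S | X meets B u}`, which are no larger since the `B u`
are disjoint and avoid `C`; this is a tree-decomposition of `G[C ∪ S]` with `S` completed. The
subtrees spanned by the branch sets pairwise intersect because the `B u` pairwise touch, so by
the Helly property of subtrees one node sees all of `S`. One such copy per component, glued
along a star at these nodes, is a tree-decomposition of `G` with `S` completed.
-/

theorem Set.ncard_le_ncard_of_pairwiseDisjoint {α β : Type*} {s : Set α} {t : Set β}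
    {B : α → Set β} (hB : s.PairwiseDisjoint B) (hmeet : ∀ a ∈ s, (t ∩ B a).Nonempty)
    (ht : t.Finite) : s.ncard ≤ t.ncard := by
  have := ht.to_subtype
  rw [← Nat.card_coe_set_eq, ← Nat.card_coe_set_eq]
  refine Nat.card_le_card_of_injective
    (fun a : s => ⟨(hmeet a a.2).some, (hmeet a a.2).some_mem.1⟩) fun a b hab => Subtype.ext ?_
  have hab : (hmeet a a.2).some = (hmeet b b.2).some := congrArg Subtype.val hab
  refine hB.elim a.2 b.2 (Set.not_disjoint_iff.mpr ⟨_, (hmeet a a.2).some_mem.2, ?_⟩)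
  exact hab ▸ (hmeet b b.2).some_mem.2

namespace SimpleGraph

variable {V W κ ι : Type*}

theorem Connected.induce_image {G : SimpleGraph V} {H : SimpleGraph W} (f : G →g H)
    {s : Set V} (hs : (G.induce s).Connected) : (H.induce (f '' s)).Connected :=
  hs.map (induceHom f (Set.mapsTo_image f s)) <| by
    rintro ⟨_, x, hx, rfl⟩
    exact ⟨⟨x, hx⟩, rfl⟩

theorem Preconnected.exists_isPath_of_induce {G : SimpleGraph V} {s : Set V}
    (hs : (G.induce s).Preconnected) {a b : V} (ha : a ∈ s) (hb : b ∈ s) :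
    ∃ p : G.Walk a b, p.IsPath ∧ ∀ x ∈ p.support, x ∈ s := by
  classical
  let p := ((hs ⟨a, ha⟩ ⟨b, hb⟩).some.map (Embedding.induce s).toHom).bypass
  refine ⟨p, Walk.bypass_isPath _, fun x hx => ?_⟩
  obtain ⟨y, -, rfl⟩ :=
    List.mem_map.mp (Walk.support_map .. ▸ Walk.support_bypass_subset_support _ hx)
  exact y.2

theorem isBridge_iff_exists_separating {G : SimpleGraph V} {x y : V} :
    G.IsBridge s(x, y) ↔
      ∃ F : V → Prop, F x ∧ ¬ F y ∧ ∀ a b, G.Adj a b → s(a, b) ≠ s(x, y) → (F a ↔ F b) := by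
  rw [isBridge_iff]
  constructor
  · refine fun h => ⟨(G.deleteEdges {s(x, y)}).Reachable x, .rfl, h, fun a b hab hne => ?_⟩
    have hab' : (G.deleteEdges {s(x, y)}).Adj a b := (deleteEdges_adj ..).mpr ⟨hab, hne⟩
    exact ⟨fun h => h.trans hab'.reachable, fun h => h.trans hab'.symm.reachable⟩
  · rintro ⟨F, hx, hy, hF⟩ hreach
    have hconst (z : V) (hz : Relation.ReflTransGen (G.deleteEdges {s(x, y)}).Adj x z) :
        F x ↔ F z := by
      induction hz with
      | refl => rfl
      | tail _ hbc ih =>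
        obtain ⟨hbc, hne⟩ := (deleteEdges_adj ..).mp hbc
        exact ih.trans (hF _ _ hbc hne)
    exact hy ((hconst y ((reachable_iff_reflTransGen _ _).mp hreach)).mp hx)

namespace IsAcyclic

variable {T : SimpleGraph ι} (hT : T.IsAcyclic)
include hT

theorem eq_of_isPath {a b : ι} {p q : T.Walk a b} (hp : p.IsPath) (hq : q.IsPath) : p = q :=
  Subtype.mk.inj <| (hT.subsingleton_path a b).elim ⟨p, hp⟩ ⟨q, hq⟩

theorem connected_induce_inter {A B : Set ι} (hA : (T.induce A).Connected)
    (hB : (T.induce B).Connected) (hAB : (A ∩ B).Nonempty) : (T.induce (A ∩ B)).Connected := by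
  have : Nonempty ↥(A ∩ B) := hAB.to_subtype
  refine ⟨fun ⟨a, haA, haB⟩ ⟨b, hbA, hbB⟩ => ?_⟩
  obtain ⟨p, hp, hpA⟩ := hA.preconnected.exists_isPath_of_induce haA hbA
  obtain ⟨q, hq, hqB⟩ := hB.preconnected.exists_isPath_of_induce haB hbB
  cases hT.eq_of_isPath hp hq
  exact (p.induce (A ∩ B) fun x hx => ⟨hpA x hx, hqB x hx⟩).reachable

theorem exists_mem_support_of_isPath {a b c : ι} {p : T.Walk a b} {q : T.Walk b c}
    {r : T.Walk a c} (hp : p.IsPath) (hq : q.IsPath) (hr : r.IsPath) :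
    ∃ m ∈ p.support, m ∈ q.support ∧ m ∈ r.support := by
  classical
  -- `m` is the first vertex of `r` met when walking back from `b` along `p`
  obtain ⟨m, hmr, hmp, hfirst⟩ := p.reverse.exists_mem_support_forall_mem_support_imp_eq
    r.support.toFinset ⟨a, by simp⟩
  rw [List.mem_toFinset] at hmr
  let w := p.reverse.takeUntil m hmp
  let d := r.dropUntil m hmr
  have hd : d.IsPath := hr.dropUntil hmr
  have hwd : (w.append d).IsPath := by
    rw [Walk.isPath_def, Walk.support_append, List.nodup_append]
    refine ⟨(hp.reverse.takeUntil hmp).support_nodup,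
      hd.support_nodup.sublist (List.tail_sublist _), fun x hxw y hyd hxy => ?_⟩
    subst hxy
    have hxr : x ∈ r.support :=
      r.support_dropUntil_subset_support hmr (List.mem_of_mem_tail hyd)
    obtain rfl : x = m := hfirst x (List.mem_toFinset.mpr hxr) hxw
    have := hd.support_nodup
    rw [← d.cons_tail_support] at this
    exact (List.nodup_cons.mp this).1 hyd
  refine ⟨m, by simpa using hmp, ?_, hmr⟩
  rw [hT.eq_of_isPath hq hwd, Walk.mem_support_append_iff]
  exact Or.inr d.start_mem_support

theorem inter_inter_nonempty {A B C : Set ι} (hA : (T.induce A).Connected)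
    (hB : (T.induce B).Connected) (hC : (T.induce C).Connected) (hAB : (A ∩ B).Nonempty)
    (hBC : (B ∩ C).Nonempty) (hCA : (C ∩ A).Nonempty) : (A ∩ B ∩ C).Nonempty := by
  obtain ⟨a, haA, haB⟩ := hAB
  obtain ⟨b, hbB, hbC⟩ := hBC
  obtain ⟨c, hcC, hcA⟩ := hCA
  obtain ⟨p, hp, hpB⟩ := hB.preconnected.exists_isPath_of_induce haB hbB
  obtain ⟨q, hq, hqC⟩ := hC.preconnected.exists_isPath_of_induce hbC hcC
  obtain ⟨r, hr, hrA⟩ := hA.preconnected.exists_isPath_of_induce haA hcA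
  obtain ⟨m, hmp, hmq, hmr⟩ := hT.exists_mem_support_of_isPath hp hq hr
  exact ⟨m, ⟨hrA m hmr, hpB m hmp⟩, hqC m hmq⟩

/-- Helly property of subtrees. -/
theorem exists_forall_mem_of_pairwise_inter_nonempty {α : Type*} {s : Finset α}
    (hs : s.Nonempty) {A : α → Set ι} (hA : ∀ a ∈ s, (T.induce (A a)).Connected)
    (hpair : ∀ a ∈ s, ∀ b ∈ s, (A a ∩ A b).Nonempty) : ∃ m, ∀ a ∈ s, m ∈ A a := by
  induction hs using Finset.Nonempty.cons_induction generalizing A with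
  | singleton a =>
    obtain ⟨m, hm⟩ := (hA a (Finset.mem_singleton_self a)).nonempty
    exact ⟨m, by simpa using hm⟩
  | cons a s ha hs ih =>
    simp only [Finset.mem_cons, forall_eq_or_imp] at hA hpair ⊢
    obtain ⟨hAa, hAs⟩ := hA
    obtain ⟨⟨-, hpa⟩, hps⟩ := hpair
    -- the sets `A b ∩ A a` still pairwise intersect, by the case of three sets
    obtain ⟨m, hm⟩ := ih (A := fun b => A b ∩ A a)
      (fun b hb => hT.connected_induce_inter (hAs b hb) hAa (hps b hb).1) fun b hb c hc => by
        obtain ⟨x, ⟨hxb, hxc⟩, hxa⟩ := hT.inter_inter_nonempty (hAs b hb) (hAs c hc) hAa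
          ((hps b hb).2 c hc) (hps c hc).1 (hpa b hb)
        exact ⟨x, ⟨hxb, hxa⟩, hxc, hxa⟩
    obtain ⟨b, hb⟩ := hs
    exact ⟨m, (hm b hb).2, fun c hc => (hm c hc).1⟩

end IsAcyclic

def gluedCopies (K : SimpleGraph κ) (T : SimpleGraph ι) (g : κ → ι) : SimpleGraph (κ × ι) where
  Adj p q := (p.1 = q.1 ∧ T.Adj p.2 q.2) ∨ (K.Adj p.1 q.1 ∧ p.2 = g p.1 ∧ q.2 = g q.1)
  symm := ⟨by rintro p q (⟨h₁, h₂⟩ | ⟨h₁, h₂, h₃⟩) <;> simp_all [adj_comm]⟩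
  loopless := ⟨by rintro p (⟨-, h⟩ | ⟨h, -⟩) <;> exact h.ne rfl⟩

namespace gluedCopies

variable (K : SimpleGraph κ) (T : SimpleGraph ι) (g : κ → ι)

def copy (c : κ) : T →g K.gluedCopies T g where
  toFun i := (c, i)
  map_rel' h := Or.inl ⟨rfl, h⟩

def attach : K →g K.gluedCopies T g where
  toFun c := (c, g c)
  map_rel' h := Or.inr ⟨h, rfl, rfl⟩

end gluedCopies

open gluedCopies

section Glued

variable {K : SimpleGraph κ} {T : SimpleGraph ι} {g : κ → ι}

theorem Connected.gluedCopies (hK : K.Connected) (hT : T.Connected) :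
    (K.gluedCopies T g).Connected := by
  have : Nonempty κ := hK.nonempty
  have : Nonempty ι := hT.nonempty
  have hbase (p : κ × ι) : (K.gluedCopies T g).Reachable p (p.1, g p.1) :=
    (hT.preconnected p.2 (g p.1)).map (copy K T g p.1)
  refine ⟨fun p q => ((hbase p).trans ?_).trans (hbase q).symm⟩
  exact (hK.preconnected p.1 q.1).map (attach K T g)

theorem IsAcyclic.gluedCopies (hK : K.IsAcyclic) (hT : T.IsAcyclic) :
    (K.gluedCopies T g).IsAcyclic := by
  classical
  rw [isAcyclic_iff_forall_adj_isBridge] at hK hT ⊢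
  rintro ⟨c, i⟩ ⟨d, j⟩ (⟨hcd, hij⟩ | ⟨hcd, hi, hj⟩)
  · -- split copy `c` along the edge; every other copy goes with the side of `g c`
    dsimp only at hcd hij
    subst hcd
    obtain ⟨F, hi, hj, hF⟩ := isBridge_iff_exists_separating.mp (hT hij)
    refine isBridge_iff_exists_separating.mpr
      ⟨fun p => F (if p.1 = c then p.2 else g c), by simpa, by simpa, ?_⟩
    rintro ⟨e, k⟩ ⟨e', l⟩ (⟨hee', hkl⟩ | ⟨-, hk, hl⟩) hne
    · dsimp only at hee' hkl ⊢
      subst hee'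
      by_cases he : e = c
      · subst he
        simp only [if_true]
        exact hF k l hkl fun h => hne (by simpa using congrArg (Sym2.map (Prod.mk e)) h)
      · simp [he]
    · dsimp only at hk hl ⊢
      split_ifs <;> simp_all
  · dsimp only at hcd hi hj
    subst hi hj
    obtain ⟨F, hc, hd, hF⟩ := isBridge_iff_exists_separating.mp (hK hcd)
    refine isBridge_iff_exists_separating.mpr ⟨fun p => F p.1, hc, hd, ?_⟩
    rintro ⟨e, k⟩ ⟨e', l⟩ (⟨hee', -⟩ | ⟨hee', hk, hl⟩) hne
    · exact iff_of_eq (congrArg F hee')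
    · dsimp only at hee' hk hl
      subst hk hl
      exact hF e e' hee' fun h => hne (by simpa using congrArg (Sym2.map fun c => (c, g c)) h)

theorem IsTree.gluedCopies (hK : K.IsTree) (hT : T.IsTree) : (K.gluedCopies T g).IsTree :=
  ⟨hK.connected.gluedCopies hT.connected, hK.isAcyclic.gluedCopies hT.isAcyclic⟩

theorem connected_induce_gluedCopies (hK : K.Connected) {X : Set (κ × ι)}
    (hg : ∀ c, (c, g c) ∈ X) (hX : ∀ c, (T.induce {i | (c, i) ∈ X}).Connected) :
    ((K.gluedCopies T g).induce X).Connected := by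
  have : Nonempty X := ⟨⟨_, hg hK.nonempty.some⟩⟩
  have hcopy (p : X) : ((K.gluedCopies T g).induce X).Reachable p ⟨_, hg p.1.1⟩ :=
    ((hX p.1.1).preconnected ⟨p.1.2, p.2⟩ ⟨g p.1.1, hg _⟩).map
      (induceHom (copy K T g p.1.1) fun _ hi => hi)
  let attachIn : K →g (K.gluedCopies T g).induce X :=
    ⟨fun c => ⟨(c, g c), hg c⟩, fun h => Or.inr ⟨h, rfl, rfl⟩⟩
  exact ⟨fun p q => ((hcopy p).trans ((hK.preconnected _ _).map attachIn)).trans (hcopy q).symm⟩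

theorem connected_induce_gluedCopies_fst_eq (c : κ) {A : Set ι} (hA : (T.induce A).Connected) :
    ((K.gluedCopies T g).induce {p | p.1 = c ∧ p.2 ∈ A}).Connected := by
  have : {p : κ × ι | p.1 = c ∧ p.2 ∈ A} = copy K T g c '' A := by
    ext ⟨d, i⟩
    constructor
    · rintro ⟨rfl, hi⟩
      exact ⟨i, hi, rfl⟩
    · rintro ⟨j, hj, ⟨⟩⟩
      exact ⟨rfl, hj⟩
  rw [this]
  exact hA.induce_image _

end Glued

end SimpleGraph

namespace TW

open SimpleGraph

namespace TreeDecomp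

variable {W : Type} {G H : SimpleGraph W}

instance (G : SimpleGraph W) : Nonempty (TreeDecomp G) := by
  have (v : W) : Nonempty {_i : Unit | v ∈ Set.univ} := ⟨⟨(), trivial⟩⟩
  exact ⟨⟨Unit, ⊥, .of_subsingleton, fun _ => Set.univ, fun _ => ⟨(), trivial⟩,
    fun _ _ _ => ⟨(), trivial, trivial⟩, fun _ => IsTree.of_subsingleton.connected⟩⟩

def ofLE (hGH : G ≤ H) (td : TreeDecomp H) : TreeDecomp G :=
  { td with bag_edge := fun _ _ huv => td.bag_edge (hGH huv) }

theorem width_le_of_forall_exists_ncard_le [Finite W] (td : TreeDecomp G) (td' : TreeDecomp H)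
    (h : ∀ j, ∃ i, (td'.bag j).ncard ≤ (td.bag i).ncard) : td'.width ≤ td.width := by
  have : Nonempty td'.ι := td'.isTree.connected.nonempty
  have hbdd : BddAbove (Set.range fun i => (td.bag i).ncard) :=
    ⟨Nat.card W, by rintro _ ⟨i, rfl⟩; exact Set.ncard_le_card _⟩
  refine Nat.sub_le_sub_right (ciSup_le fun j => ?_) 1
  obtain ⟨i, hi⟩ := h j
  exact hi.trans (le_ciSup hbdd i)

theorem connected_induce_bag_inter_nonempty (td : TreeDecomp G) {A : Set W}
    (hA : (G.induce A).Connected) :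
    (td.tree.induce {i | (td.bag i ∩ A).Nonempty}).Connected := by
  set X := {i | (td.bag i ∩ A).Nonempty}
  have hvert {a} (ha : a ∈ A) {i j} (hi : a ∈ td.bag i) (hj : a ∈ td.bag j) :
      (td.tree.induce X).Reachable ⟨i, a, hi, ha⟩ ⟨j, a, hj, ha⟩ :=
    ((td.bag_conn a).preconnected ⟨i, hi⟩ ⟨j, hj⟩).map
      (td.tree.induceHomOfLE (show {k | a ∈ td.bag k} ⊆ X from fun _ hk => ⟨a, hk, ha⟩)).toHom
  have hwalk (x y : A) (w : (G.induce A).Walk x y) : ∀ i j (hi : x.1 ∈ td.bag i)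
      (hj : y.1 ∈ td.bag j), (td.tree.induce X).Reachable ⟨i, x, hi, x.2⟩ ⟨j, y, hj, y.2⟩ := by
    induction w with
    | nil => exact fun i j hi hj => hvert (Subtype.prop _) hi hj
    | cons hxy _ ih =>
      intro i j hi hj
      obtain ⟨k, hxk, hyk⟩ := td.bag_edge hxy
      exact (hvert (Subtype.prop _) hi hxk).trans (ih k j hyk hj)
  obtain ⟨⟨a, ha⟩⟩ := hA.nonempty
  obtain ⟨i, hi⟩ := td.bag_cover a
  have : Nonempty X := ⟨⟨i, a, hi, ha⟩⟩
  refine ⟨?_⟩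
  rintro ⟨i, x, hxi, hxA⟩ ⟨j, y, hyj, hyA⟩
  exact hwalk ⟨x, hxA⟩ ⟨y, hyA⟩ (hA.preconnected _ _).some i j hxi hyj

theorem exists_bag_inter_nonempty {α : Type*} (td : TreeDecomp G) {s : Set α} (hs : s.Finite)
    (hne : s.Nonempty) {B : α → Set W} (hB : ∀ u ∈ s, (G.induce (B u)).Connected)
    (hadj : ∀ u ∈ s, ∀ v ∈ s, u ≠ v → ∃ x ∈ B u, ∃ y ∈ B v, G.Adj x y) :
    ∃ i, ∀ u ∈ s, (td.bag i ∩ B u).Nonempty := by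
  have hpair : ∀ u ∈ hs.toFinset, ∀ v ∈ hs.toFinset,
      ({i | (td.bag i ∩ B u).Nonempty} ∩ {i | (td.bag i ∩ B v).Nonempty}).Nonempty := by
    simp only [Set.Finite.mem_toFinset]
    intro u hu v hv
    rcases eq_or_ne u v with rfl | huv
    · obtain ⟨i, hi⟩ := (td.connected_induce_bag_inter_nonempty (hB u hu)).nonempty
      exact ⟨i, hi, hi⟩
    · obtain ⟨x, hx, y, hy, hxy⟩ := hadj u hu v hv huv
      obtain ⟨i, hxi, hyi⟩ := td.bag_edge hxy
      exact ⟨i, ⟨x, hxi, hx⟩, ⟨y, hyi, hy⟩⟩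
  obtain ⟨i, hi⟩ := td.isTree.isAcyclic.exists_forall_mem_of_pairwise_inter_nonempty
    (hs.toFinset_nonempty.mpr hne)
    (fun u hu => td.connected_induce_bag_inter_nonempty (hB u (hs.mem_toFinset.mp hu))) hpair
  exact ⟨i, fun u hu => hi u (hs.mem_toFinset.mpr hu)⟩

end TreeDecomp

theorem treewidth_le_of_forall_exists_width_le {W : Type} {G H : SimpleGraph W}
    (h : ∀ td : TreeDecomp H, ∃ td' : TreeDecomp G, td'.width ≤ td.width) :
    treewidth G ≤ treewidth H := by
  refine le_ciInf fun td => ?_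
  obtain ⟨td', h'⟩ := h td
  exact (ciInf_le (OrderBot.bddBelow _) td').trans h'

theorem treewidth_mono {W : Type} {G H : SimpleGraph W} (hGH : G ≤ H) :
    treewidth G ≤ treewidth H :=
  treewidth_le_of_forall_exists_width_le fun td => ⟨td.ofLE hGH, le_rfl⟩

section Components

variable {V : Type} {G : SimpleGraph V} {S : Set V}

theorem Separator.nonempty (h : Separator G S) : S.Nonempty := by
  rw [Set.nonempty_iff_ne_empty]
  rintro rfl
  exact lt_irrefl _ h

theorem Separator.compl_nonempty (h : Separator G S) : Sᶜ.Nonempty := by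
  obtain ⟨c⟩ := (Nat.card_pos_iff.mp (Nat.zero_lt_of_lt h)).1
  exact ⟨c.out.1, c.out.2⟩

def componentSet (c : (G.induce Sᶜ).ConnectedComponent) : Set V := Subtype.val '' c.supp

theorem mem_componentSet_iff {c : (G.induce Sᶜ).ConnectedComponent} {v : V} :
    v ∈ componentSet c ↔ ∃ hv : v ∉ S, (G.induce Sᶜ).connectedComponentMk ⟨v, hv⟩ = c := by
  simp [componentSet]

theorem mem_componentSet_mk {v : V} (hv : v ∉ S) :
    v ∈ componentSet ((G.induce Sᶜ).connectedComponentMk ⟨v, hv⟩) :=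
  mem_componentSet_iff.mpr ⟨hv, rfl⟩

theorem notMem_of_mem_componentSet {c : (G.induce Sᶜ).ConnectedComponent} {v : V}
    (hv : v ∈ componentSet c) : v ∉ S :=
  (mem_componentSet_iff.mp hv).1

theorem eq_of_mem_componentSet {c d : (G.induce Sᶜ).ConnectedComponent} {v : V}
    (hc : v ∈ componentSet c) (hd : v ∈ componentSet d) : c = d := by
  obtain ⟨hv, rfl⟩ := mem_componentSet_iff.mp hc
  obtain ⟨-, rfl⟩ := mem_componentSet_iff.mp hd
  rfl

theorem mem_componentSet_of_adj {c : (G.induce Sᶜ).ConnectedComponent} {u v : V}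
    (hu : u ∈ componentSet c) (hv : v ∉ S) (huv : G.Adj u v) : v ∈ componentSet c := by
  obtain ⟨hu', rfl⟩ := mem_componentSet_iff.mp hu
  exact mem_componentSet_iff.mpr ⟨hv, ConnectedComponent.connectedComponentMk_eq_of_adj
    (show (G.induce Sᶜ).Adj ⟨v, hv⟩ ⟨u, hu'⟩ from huv.symm)⟩

theorem isCompAssoc_componentSet (c : (G.induce Sᶜ).ConnectedComponent) :
    IsCompAssoc G S (componentSet c) := by
  refine ⟨c.connected_toSimpleGraph.induce_image (Embedding.induce Sᶜ).toHom,
    Set.disjoint_left.mpr fun _ hv => notMem_of_mem_componentSet hv, ?_⟩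
  rintro v ⟨hvc, u, hu, huv⟩
  by_contra hv
  exact hvc (mem_componentSet_of_adj hu hv huv)

end Components

structure IsCliqueMinorModel {V : Type} (G : SimpleGraph V) (S : Set V) (B : V → Set V) : Prop where
  connected : ∀ u ∈ S, SetConnected G (B u)
  mem : ∀ u ∈ S, u ∈ B u
  pairwiseDisjoint : S.PairwiseDisjoint B
  exists_adj : ∀ u ∈ S, ∀ v ∈ S, u ≠ v → ∃ x ∈ B u, ∃ y ∈ B v, G.Adj x y

section Construction

variable {V : Type} {G : SimpleGraph V} {S : Set V} (td : TreeDecomp G)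
  (B : (G.induce Sᶜ).ConnectedComponent → V → Set V)

/-- The bag of node `i` in the copy of `td` belonging to the component `c`: the branch sets
`B c u` are contracted onto `u`, and everything outside `c ∪ S` is deleted. -/
def liftedBag (p : (G.induce Sᶜ).ConnectedComponent × td.ι) : Set V :=
  (td.bag p.2 ∩ componentSet p.1) ∪ {u | u ∈ S ∧ (td.bag p.2 ∩ B p.1 u).Nonempty}

variable {td B}

theorem mem_liftedBag_of_mem {u : V} (hu : u ∈ S) {c i} :
    u ∈ liftedBag td B (c, i) ↔ (td.bag i ∩ B c u).Nonempty := by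
  have : u ∉ componentSet c := fun h => notMem_of_mem_componentSet h hu
  simp [liftedBag, hu, this]

theorem mem_liftedBag_of_notMem {v : V} (hv : v ∉ S) {c i} :
    v ∈ liftedBag td B (c, i) ↔ v ∈ td.bag i ∧ v ∈ componentSet c := by
  simp [liftedBag, hv]

theorem exists_liftedBag_of_adj (hB : ∀ c, IsCliqueMinorModel G S (B c)) {u v : V} (hv : v ∉ S)
    (huv : G.Adj u v) : ∃ p, u ∈ liftedBag td B p ∧ v ∈ liftedBag td B p := by
  obtain ⟨i, hui, hvi⟩ := td.bag_edge huv
  let c := (G.induce Sᶜ).connectedComponentMk ⟨v, hv⟩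
  refine ⟨(c, i), ?_, (mem_liftedBag_of_notMem hv).mpr ⟨hvi, mem_componentSet_mk hv⟩⟩
  by_cases hu : u ∈ S
  · exact (mem_liftedBag_of_mem hu).mpr ⟨u, hui, (hB c).mem u hu⟩
  · exact (mem_liftedBag_of_notMem hu).mpr
      ⟨hui, mem_componentSet_of_adj (mem_componentSet_mk hv) hu huv.symm⟩

theorem ncard_liftedBag_le [Finite V] (hBC : ∀ c, ∀ u ∈ S, B c u ⊆ (componentSet c)ᶜ)
    (hB : ∀ c, IsCliqueMinorModel G S (B c)) (c i) :
    (liftedBag td B (c, i)).ncard ≤ (td.bag i).ncard := by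
  have hcard :
      {u | u ∈ S ∧ (td.bag i ∩ B c u).Nonempty}.ncard ≤ (td.bag i \ componentSet c).ncard :=
    Set.ncard_le_ncard_of_pairwiseDisjoint ((hB c).pairwiseDisjoint.subset fun _ hu => hu.1)
      (fun u ⟨hu, x, hxi, hxB⟩ => ⟨x, ⟨hxi, hBC c u hu hxB⟩, hxB⟩) (Set.toFinite _)
  calc (liftedBag td B (c, i)).ncard
      ≤ (td.bag i ∩ componentSet c).ncard + (td.bag i \ componentSet c).ncard :=
        (Set.ncard_union_le _ _).trans (Nat.add_le_add_left hcard _)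
    _ = (td.bag i).ncard := Set.ncard_inter_add_ncard_sdiff_eq_ncard _ _

variable {g : (G.induce Sᶜ).ConnectedComponent → td.ι}

theorem exists_liftedBag_of_sup_adj (hB : ∀ c, IsCliqueMinorModel G S (B c))
    (hg : ∀ c, ∀ u ∈ S, u ∈ liftedBag td B (c, g c)) (c₀ : (G.induce Sᶜ).ConnectedComponent)
    {u v : V} (huv : (G ⊔ cliqueOn S).Adj u v) :
    ∃ p, u ∈ liftedBag td B p ∧ v ∈ liftedBag td B p := by
  rcases huv with huv | ⟨-, hu, hv⟩
  · by_cases hv : v ∈ S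
    · by_cases hu : u ∈ S
      · exact ⟨_, hg c₀ u hu, hg c₀ v hv⟩
      · obtain ⟨p, hvp, hup⟩ := exists_liftedBag_of_adj hB hu huv.symm
        exact ⟨p, hup, hvp⟩
    · exact exists_liftedBag_of_adj hB hv huv
  · exact ⟨_, hg c₀ u hu, hg c₀ v hv⟩

theorem connected_induce_liftedBag (hB : ∀ c, IsCliqueMinorModel G S (B c))
    (hg : ∀ c, ∀ u ∈ S, u ∈ liftedBag td B (c, g c)) (c₀ : (G.induce Sᶜ).ConnectedComponent)
    (v : V) :
    ((starGraph c₀).gluedCopies td.tree g |>.induce {p | v ∈ liftedBag td B p}).Connected := by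
  by_cases hv : v ∈ S
  · refine connected_induce_gluedCopies (connected_starGraph c₀) (fun c => hg c v hv) fun c => ?_
    have hslice : {i | (c, i) ∈ {p | v ∈ liftedBag td B p}} = {i | (td.bag i ∩ B c v).Nonempty} :=
      Set.ext fun i => mem_liftedBag_of_mem hv
    rw [hslice]
    exact td.connected_induce_bag_inter_nonempty ((hB c).connected v hv)
  · let cv := (G.induce Sᶜ).connectedComponentMk ⟨v, hv⟩
    have hX : {p | v ∈ liftedBag td B p} = {p | p.1 = cv ∧ p.2 ∈ {i | v ∈ td.bag i}} := by
      ext ⟨c, i⟩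
      simp only [Set.mem_ofPred_eq, mem_liftedBag_of_notMem hv]
      exact ⟨fun ⟨hvi, hvc⟩ => ⟨eq_of_mem_componentSet hvc (mem_componentSet_mk hv), hvi⟩,
        fun ⟨hc, hvi⟩ => ⟨hvi, hc ▸ mem_componentSet_mk hv⟩⟩
    rw [hX]
    exact connected_induce_gluedCopies_fst_eq cv (td.bag_conn v)

variable (td) in
theorem exists_treeDecomp_sup_cliqueOn_width_le [Finite V] (hS : S.Nonempty) (hSc : Sᶜ.Nonempty)
    (hBC : ∀ c, ∀ u ∈ S, B c u ⊆ (componentSet c)ᶜ) (hB : ∀ c, IsCliqueMinorModel G S (B c)) :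
    ∃ td' : TreeDecomp (G ⊔ cliqueOn S), td'.width ≤ td.width := by
  choose g hg using fun c => td.exists_bag_inter_nonempty (Set.toFinite S) hS (hB c).connected
    (hB c).exists_adj
  have hgS (c) (u) (hu : u ∈ S) : u ∈ liftedBag td B (c, g c) :=
    (mem_liftedBag_of_mem hu).mpr (hg c u hu)
  obtain ⟨v₀, hv₀⟩ := hSc
  let c₀ := (G.induce Sᶜ).connectedComponentMk ⟨v₀, hv₀⟩
  refine ⟨⟨_ × td.ι, (starGraph c₀).gluedCopies td.tree g,
    (isTree_starGraph c₀).gluedCopies td.isTree, liftedBag td B, fun v => ?_,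
    fun _ _ => exists_liftedBag_of_sup_adj hB hgS c₀, connected_induce_liftedBag hB hgS c₀⟩,
    td.width_le_of_forall_exists_ncard_le _ fun ⟨c, i⟩ => ⟨i, ncard_liftedBag_le hBC hB c i⟩⟩
  by_cases hv : v ∈ S
  · exact ⟨_, hgS c₀ v hv⟩
  · obtain ⟨i, hi⟩ := td.bag_cover v
    exact ⟨(_, i), (mem_liftedBag_of_notMem hv).mpr ⟨hi, mem_componentSet_mk hv⟩⟩

end Construction

/-- If `S` is a separator of `G` such that for every component `C` associated with `S`
the graph induced on the complement of `C` contains a clique on `S` as a labelled minor,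
then `S` is safe: completing `S` into a clique does not change the treewidth. -/
theorem minor_safe_separator {V : Type} [Finite V] (G : SimpleGraph V) (S : Set V)
    (hS : Separator G S)
    (hminor : ∀ C : Set V, IsCompAssoc G S C →
      ∃ B : V → Set V,
        (∀ u ∈ S, B u ⊆ (Cᶜ : Set V)) ∧
        (∀ u ∈ S, SetConnected G (B u)) ∧
        (∀ u ∈ S, u ∈ B u) ∧
        (∀ u ∈ S, ∀ v ∈ S, u ≠ v → Disjoint (B u) (B v)) ∧
        (∀ u ∈ S, ∀ v ∈ S, u ≠ v → ∃ x ∈ B u, ∃ y ∈ B v, G.Adj x y)) :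
    treewidth (G ⊔ cliqueOn S) = treewidth G := by
  choose B hBC hconn hmem hdisj hadj using fun c : (G.induce Sᶜ).ConnectedComponent =>
    hminor _ (isCompAssoc_componentSet c)
  refine le_antisymm (treewidth_le_of_forall_exists_width_le fun td => ?_)
    (treewidth_mono le_sup_left)
  exact exists_treeDecomp_sup_cliqueOn_width_le td hS.nonempty hS.compl_nonempty hBC
    fun c => ⟨hconn c, hmem c, fun u hu v hv => hdisj c u hu v hv, hadj c⟩

end TW
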